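/- In a cOMARS design built from two foldovers of n×m conference designs with n ≡ 0 (mod 4), the absolute correlation between two two-factor interaction columns involving four distinct factors belongs to the set {(n − 2λ)/(n − 2) : λ = 2, 3, …, n/2}; equivalently, it equals the J4-characteristic divided by the number of nonzero entries of the corresponding four-factor interaction column. -/

import Mathlib

open Finset Filter

/-- A conference design: mutually orthogonal columns, exactly one zero per column,
at most one zero per row, and ±1 entries elsewhere. -/
def IsConferenceDesign {n m : ℕ} (C : Matrix (Fin n) (Fin m) ℝ) : Prop :=
  (∀ i j : Fin m, i ≠ j → ∑ r, C r i * C r j = 0) ∧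
  (∀ j : Fin m, ∃! r : Fin n, C r j = 0) ∧
  (∀ r : Fin n, ∀ i j : Fin m, C r i = 0 → C r j = 0 → i = j) ∧
  (∀ r : Fin n, ∀ j : Fin m, C r j = 0 ∨ C r j = 1 ∨ C r j = -1)

/-- The foldover [C; -C] of a matrix C. -/
def foldover {n m : ℕ} (C : Matrix (Fin n) (Fin m) ℝ) :
    Matrix (Fin n ⊕ Fin n) (Fin m) ℝ :=
  fun r j => match r with
    | .inl a => C a j
    | .inr a => -C a j

/-- A cOMARS design: two stacked parent DSDs (foldovers) plus n₀ center runs. -/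
def cOMARS {n m : ℕ} (C₁ C₂ : Matrix (Fin n) (Fin m) ℝ) (n₀ : ℕ) :
    Matrix (((Fin n ⊕ Fin n) ⊕ (Fin n ⊕ Fin n)) ⊕ Fin n₀) (Fin m) ℝ :=
  fun r j => match r with
    | .inl (.inl a) => foldover C₁ a j
    | .inl (.inr a) => foldover C₂ a j
    | .inr _ => 0

/-- Pearson correlation of two columns of a model matrix. -/
noncomputable def pearson {ι : Type*} [Fintype ι] (u v : ι → ℝ) : ℝ :=
  (∑ r, u r * v r - (∑ r, u r) * (∑ r, v r) / (Fintype.card ι)) /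
    (Real.sqrt (∑ r, u r ^ 2 - (∑ r, u r) ^ 2 / (Fintype.card ι)) *
     Real.sqrt (∑ r, v r ^ 2 - (∑ r, v r) ^ 2 / (Fintype.card ι)))

/-!
Let `S = ∑ x_i x_j x_k x_l` over the rows of one conference design. The zeros of distinct
columns lie in distinct rows, so exactly `n - 4` rows have all four entries nonzero and
`|S| ≤ n - 4`. In every row `1 + e₂ - p + 2 p²` is divisible by 4, where `p = x_i x_j x_k x_l`
and `e₂` is the sum of the six pairwise products; summing over the rows, orthogonality removes
`e₂` and leaves `3 n - 8 - S`, so `4 ∣ S` when `4 ∣ n`. In the cOMARS design the foldovers double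
every such sum and the center runs contribute nothing: both interaction columns are centered with
squared norm `4 (n - 2)`, and their correlation is `2 (S₁ + S₂) / (4 (n - 2))`. Writing
`S₁ + S₂ = 4 t`, the witness is `λ = n / 2 - |t|`.
-/

lemma Finset.card_insert_four {α : Type*} [DecidableEq α] {a b c d : α} (hab : a ≠ b)
    (hac : a ≠ c) (had : a ≠ d) (hbc : b ≠ c) (hbd : b ≠ d) (hcd : c ≠ d) :
    #{a, b, c, d} = 4 := by
  simp [hab, hac, had, hbc, hbd, hcd]

@[to_additive]
lemma Finset.prod_insert_four {α β : Type*} [DecidableEq α] [CommMonoid β] {a b c d : α}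
    (hab : a ≠ b) (hac : a ≠ c) (had : a ≠ d) (hbc : b ≠ c) (hbd : b ≠ d) (hcd : c ≠ d)
    (f : α → β) : ∏ x ∈ {a, b, c, d}, f x = f a * f b * f c * f d := by
  simp [hab, hac, had, hbc, hbd, hcd, mul_assoc]

lemma quad_row_mem_zmultiples {x y z w : ℝ} (hx : x = 0 ∨ x = 1 ∨ x = -1)
    (hy : y = 0 ∨ y = 1 ∨ y = -1) (hz : z = 0 ∨ z = 1 ∨ z = -1) (hw : w = 0 ∨ w = 1 ∨ w = -1)
    (h : 3 ≤ x ^ 2 + y ^ 2 + z ^ 2 + w ^ 2) :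
    1 + (x * y + x * z + x * w + y * z + y * w + z * w) - x * y * z * w + 2 * (x * y * z * w) ^ 2
      ∈ AddSubgroup.zmultiples (4 : ℝ) := by
  have h8 : (8 : ℝ) ∈ AddSubgroup.zmultiples 4 := ⟨2, by norm_num⟩
  revert h
  rcases hx with rfl | rfl | rfl <;> rcases hy with rfl | rfl | rfl <;>
    rcases hz with rfl | rfl | rfl <;> rcases hw with rfl | rfl | rfl <;> norm_num [h8]

namespace IsConferenceDesign

variable {n m : ℕ} {C : Matrix (Fin n) (Fin m) ℝ}

lemma sq_eq_ite (hC : IsConferenceDesign C) (r : Fin n) (j : Fin m) :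
    C r j ^ 2 = if C r j = 0 then 0 else 1 := by
  rcases hC.2.2.2 r j with h | h | h <;> simp [h]

lemma abs_eq_sq (hC : IsConferenceDesign C) (r : Fin n) (j : Fin m) :
    |C r j| = C r j ^ 2 := by
  rcases hC.2.2.2 r j with h | h | h <;> simp [h]

lemma sum_prod_sq (hC : IsConferenceDesign C) (T : Finset (Fin m)) :
    ∑ r, ∏ j ∈ T, C r j ^ 2 = n - #T := by
  classical
  choose z hz hzu using hC.2.1
  have hinj : Function.Injective z := fun i j h => hC.2.2.1 (z i) i j (hz i) (h ▸ hz j)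
  have hrow : ∀ r, ∏ j ∈ T, C r j ^ 2 = 1 - if r ∈ T.image z then 1 else 0 := by
    intro r
    have hzero : ∀ j, C r j = 0 ↔ r = z j := fun j => ⟨hzu j r, fun h => h ▸ hz j⟩
    simp only [hC.sq_eq_ite, hzero, mem_image]
    split_ifs with hr
    · obtain ⟨a, ha, rfl⟩ := hr
      rw [prod_eq_zero ha (by simp), sub_self]
    · push Not at hr
      rw [prod_eq_one fun a ha => if_neg (hr a ha).symm, sub_zero]
  simp only [hrow, sum_sub_distrib, sum_ite_mem, univ_inter, sum_const, card_univ,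
    Fintype.card_fin, card_image_of_injective _ hinj]
  simp

lemma abs_sum_prod_le (hC : IsConferenceDesign C) (T : Finset (Fin m)) :
    |∑ r, ∏ j ∈ T, C r j| ≤ n - #T :=
  calc |∑ r, ∏ j ∈ T, C r j| ≤ ∑ r, |∏ j ∈ T, C r j| := abs_sum_le_sum_abs _ _
    _ = ∑ r, ∏ j ∈ T, C r j ^ 2 := by simp only [abs_prod, hC.abs_eq_sq]
    _ = n - #T := hC.sum_prod_sq T

lemma card_sub_one_le_sum_sq (hC : IsConferenceDesign C) (r : Fin n) (T : Finset (Fin m)) :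
    (#T : ℝ) - 1 ≤ ∑ j ∈ T, C r j ^ 2 := by
  classical
  have hzeros : #{j ∈ T | C r j = 0} ≤ 1 := card_le_one.mpr fun a ha b hb =>
    hC.2.2.1 r a b (mem_filter.1 ha).2 (mem_filter.1 hb).2
  have hsq : ∀ j, C r j ^ 2 = 1 - if C r j = 0 then 1 else 0 := fun j => by
    rw [hC.sq_eq_ite]; split_ifs <;> norm_num
  simp only [hsq, sum_sub_distrib, sum_const, nsmul_one, sum_boole]
  have : (#{j ∈ T | C r j = 0} : ℝ) ≤ 1 := by exact_mod_cast hzeros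
  linarith

lemma sum_mul_sq (hC : IsConferenceDesign C) {i j : Fin m} (hij : i ≠ j) :
    ∑ r, (C r i * C r j) ^ 2 = n - 2 := by
  classical
  simpa [prod_pair hij, card_pair hij, mul_pow] using hC.sum_prod_sq {i, j}

section FourColumns

variable {i j k l : Fin m}

lemma sum_quad_sq (hC : IsConferenceDesign C) (hij : i ≠ j) (hik : i ≠ k) (hil : i ≠ l)
    (hjk : j ≠ k) (hjl : j ≠ l) (hkl : k ≠ l) :
    ∑ r, (C r i * C r j * C r k * C r l) ^ 2 = n - 4 := by
  classical
  simpa [prod_insert_four hij hik hil hjk hjl hkl, card_insert_four hij hik hil hjk hjl hkl,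
    mul_pow] using hC.sum_prod_sq {i, j, k, l}

lemma abs_sum_quad_le (hC : IsConferenceDesign C) (hij : i ≠ j) (hik : i ≠ k) (hil : i ≠ l)
    (hjk : j ≠ k) (hjl : j ≠ l) (hkl : k ≠ l) :
    |∑ r, C r i * C r j * C r k * C r l| ≤ n - 4 := by
  classical
  simpa [prod_insert_four hij hik hil hjk hjl hkl, card_insert_four hij hik hil hjk hjl hkl]
    using hC.abs_sum_prod_le {i, j, k, l}

lemma three_le_sum_sq_quad (hC : IsConferenceDesign C) (r : Fin n) (hij : i ≠ j) (hik : i ≠ k)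
    (hil : i ≠ l) (hjk : j ≠ k) (hjl : j ≠ l) (hkl : k ≠ l) :
    3 ≤ C r i ^ 2 + C r j ^ 2 + C r k ^ 2 + C r l ^ 2 := by
  classical
  have := hC.card_sub_one_le_sum_sq r {i, j, k, l}
  rw [card_insert_four hij hik hil hjk hjl hkl, sum_insert_four hij hik hil hjk hjl hkl] at this
  norm_num at this
  linarith

lemma exists_sum_quad_eq_four_mul (hC : IsConferenceDesign C) (hn : 4 ∣ n) (hij : i ≠ j)
    (hik : i ≠ k) (hil : i ≠ l) (hjk : j ≠ k) (hjl : j ≠ l) (hkl : k ≠ l) :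
    ∃ t : ℤ, ∑ r, C r i * C r j * C r k * C r l = 4 * t := by
  have hrows := AddSubgroup.sum_mem _ fun r (_ : r ∈ univ) => quad_row_mem_zmultiples
    (hC.2.2.2 r i) (hC.2.2.2 r j) (hC.2.2.2 r k) (hC.2.2.2 r l)
    (hC.three_le_sum_sq_quad r hij hik hil hjk hjl hkl)
  simp only [sum_add_distrib, sum_sub_distrib, ← mul_sum, sum_const, card_univ, Fintype.card_fin,
    nsmul_one, hC.1 _ _ hij, hC.1 _ _ hik, hC.1 _ _ hil, hC.1 _ _ hjk, hC.1 _ _ hjl,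
    hC.1 _ _ hkl, hC.sum_quad_sq hij hik hil hjk hjl hkl] at hrows
  obtain ⟨a, ha⟩ := AddSubgroup.mem_zmultiples_iff.mp hrows
  obtain ⟨b, hb⟩ := hn
  have hb' : (n : ℝ) = 4 * b := by exact_mod_cast hb
  refine ⟨3 * b - 2 - a, ?_⟩
  rw [zsmul_eq_mul] at ha
  push_cast
  linarith

end FourColumns

end IsConferenceDesign

lemma sum_cOMARS {n m n₀ : ℕ} (C₁ C₂ : Matrix (Fin n) (Fin m) ℝ) {f : (Fin m → ℝ) → ℝ}
    (hf₀ : f 0 = 0) (hf : ∀ v, f (-v) = f v) :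
    ∑ r, f (cOMARS C₁ C₂ n₀ r) = 2 * ∑ a, f (C₁ a) + 2 * ∑ a, f (C₂ a) := by
  have h₁ : ∀ a, cOMARS C₁ C₂ n₀ (.inl (.inl (.inl a))) = C₁ a := fun _ => rfl
  have h₁' : ∀ a, cOMARS C₁ C₂ n₀ (.inl (.inl (.inr a))) = -C₁ a := fun _ => rfl
  have h₂ : ∀ a, cOMARS C₁ C₂ n₀ (.inl (.inr (.inl a))) = C₂ a := fun _ => rfl
  have h₂' : ∀ a, cOMARS C₁ C₂ n₀ (.inl (.inr (.inr a))) = -C₂ a := fun _ => rfl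
  have h₀ : ∀ a, cOMARS C₁ C₂ n₀ (.inr a) = 0 := fun _ => rfl
  simp only [Fintype.sum_sum_type, h₁, h₁', h₂, h₂', h₀, hf, hf₀, sum_const_zero, add_zero]
  ring

lemma abs_pearson_of_sum_eq_zero {ι : Type*} [Fintype ι] {u v : ι → ℝ} {A : ℝ} (hA : 0 ≤ A)
    (hu : ∑ r, u r = 0) (hv : ∑ r, v r = 0) (hu₂ : ∑ r, u r ^ 2 = A) (hv₂ : ∑ r, v r ^ 2 = A) :
    |pearson u v| = |∑ r, u r * v r| / A := by
  rw [pearson, hu, hv, hu₂, hv₂]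
  simp [Real.mul_self_sqrt hA, abs_div, abs_of_nonneg hA]

lemma exists_lam_abs_div_eq {n : ℕ} (hn : 2 ∣ n) {t : ℤ} (ht : |(8 * t : ℝ)| ≤ 4 * (n - 4)) :
    ∃ lam : ℕ, 2 ≤ lam ∧ lam ≤ n / 2 ∧
      |(8 * t : ℝ)| / (4 * (n - 2)) = (n - 2 * lam) / (n - 2) := by
  set q := t.natAbs
  have habs : |(8 * t : ℝ)| = 8 * q := by
    rw [abs_mul, Nat.cast_natAbs, Int.cast_abs]; norm_num
  have hq : 2 * q + 4 ≤ n := by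
    rw [habs] at ht
    exact_mod_cast (by linarith : (2 * q + 4 : ℝ) ≤ n)
  refine ⟨n / 2 - q, by omega, by omega, ?_⟩
  have hlam : ((2 * (n / 2 - q) + 2 * q : ℕ) : ℝ) = n := by congr 1; omega
  push_cast at hlam
  rw [habs, show (n : ℝ) - 2 * ↑(n / 2 - q) = 2 * q by linarith,
    show (8 : ℝ) * q = 4 * (2 * q) by ring, mul_div_mul_left _ _ four_ne_zero]

section cOMARS

variable {n m n₀ : ℕ} {C₁ C₂ : Matrix (Fin n) (Fin m) ℝ} {i j : Fin m}

lemma sum_cOMARS_mul (h₁ : IsConferenceDesign C₁) (h₂ : IsConferenceDesign C₂) (hij : i ≠ j) :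
    ∑ r, cOMARS C₁ C₂ n₀ r i * cOMARS C₁ C₂ n₀ r j = 0 := by
  rw [sum_cOMARS C₁ C₂ (f := fun v => v i * v j) (by simp) (fun v => by simp), h₁.1 i j hij,
    h₂.1 i j hij]
  ring

lemma sum_cOMARS_mul_sq (h₁ : IsConferenceDesign C₁) (h₂ : IsConferenceDesign C₂) (hij : i ≠ j) :
    ∑ r, (cOMARS C₁ C₂ n₀ r i * cOMARS C₁ C₂ n₀ r j) ^ 2 = 4 * (n - 2) := by
  rw [sum_cOMARS C₁ C₂ (f := fun v => (v i * v j) ^ 2) (by simp) (fun v => by simp),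
    h₁.sum_mul_sq hij, h₂.sum_mul_sq hij]
  ring

lemma sum_cOMARS_quad (C₁ C₂ : Matrix (Fin n) (Fin m) ℝ) (i j k l : Fin m) :
    ∑ r, cOMARS C₁ C₂ n₀ r i * cOMARS C₁ C₂ n₀ r j * cOMARS C₁ C₂ n₀ r k * cOMARS C₁ C₂ n₀ r l
      = 2 * (∑ a, C₁ a i * C₁ a j * C₁ a k * C₁ a l + ∑ a, C₂ a i * C₂ a j * C₂ a k * C₂ a l) := by
  rw [sum_cOMARS C₁ C₂ (f := fun v => v i * v j * v k * v l) (by simp) (fun v => by simp)]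
  ring

end cOMARS

theorem stmt_14 {n m n₀ : ℕ} (C₁ C₂ : Matrix (Fin n) (Fin m) ℝ)
    (h₁ : IsConferenceDesign C₁) (h₂ : IsConferenceDesign C₂)
    (hn4 : n % 4 = 0)
    (i j k l : Fin m) (hij : i ≠ j) (hik : i ≠ k) (hil : i ≠ l)
    (hjk : j ≠ k) (hjl : j ≠ l) (hkl : k ≠ l) :
    ∃ lam : ℕ, 2 ≤ lam ∧ lam ≤ n / 2 ∧
      |pearson (fun r => cOMARS C₁ C₂ n₀ r i * cOMARS C₁ C₂ n₀ r j)
          (fun r => cOMARS C₁ C₂ n₀ r k * cOMARS C₁ C₂ n₀ r l)|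
        = ((n : ℝ) - 2 * (lam : ℝ)) / ((n : ℝ) - 2) ∧
      |pearson (fun r => cOMARS C₁ C₂ n₀ r i * cOMARS C₁ C₂ n₀ r j)
          (fun r => cOMARS C₁ C₂ n₀ r k * cOMARS C₁ C₂ n₀ r l)|
        = |∑ r, cOMARS C₁ C₂ n₀ r i * cOMARS C₁ C₂ n₀ r j *
            cOMARS C₁ C₂ n₀ r k * cOMARS C₁ C₂ n₀ r l| / (4 * ((n : ℝ) - 2)) := by
  have hn : 4 ∣ n := Nat.dvd_of_mod_eq_zero hn4
  obtain ⟨t₁, ht₁⟩ := h₁.exists_sum_quad_eq_four_mul hn hij hik hil hjk hjl hkl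
  obtain ⟨t₂, ht₂⟩ := h₂.exists_sum_quad_eq_four_mul hn hij hik hil hjk hjl hkl
  have hb₁ := abs_le.mp (ht₁ ▸ h₁.abs_sum_quad_le hij hik hil hjk hjl hkl)
  have hb₂ := abs_le.mp (ht₂ ▸ h₂.abs_sum_quad_le hij hik hil hjk hjl hkl)
  have hcorr := abs_pearson_of_sum_eq_zero (by linarith) (sum_cOMARS_mul (n₀ := n₀) h₁ h₂ hij)
    (sum_cOMARS_mul h₁ h₂ hkl) (sum_cOMARS_mul_sq h₁ h₂ hij) (sum_cOMARS_mul_sq h₁ h₂ hkl)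
  simp only [← mul_assoc] at hcorr
  have hJ : ∑ r, cOMARS C₁ C₂ n₀ r i * cOMARS C₁ C₂ n₀ r j * cOMARS C₁ C₂ n₀ r k *
      cOMARS C₁ C₂ n₀ r l = 8 * (t₁ + t₂ : ℤ) := by
    rw [sum_cOMARS_quad, ht₁, ht₂]; push_cast; ring
  obtain ⟨lam, h2lam, hlam, hJlam⟩ := exists_lam_abs_div_eq (dvd_trans (by norm_num) hn)
    (t := t₁ + t₂) (abs_le.mpr ⟨by push_cast; linarith, by push_cast; linarith⟩)
  exact ⟨lam, h2lam, hlam, by rw [hcorr, hJ, hJlam], hcorr⟩
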